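/- (Necklace joining.) Let ℓ be a prime, q ≥ 1 and t ≥ 1. Suppose the set of aperiodic necklaces of length ℓ over q colours can be partitioned into parts of size t, each of which induces a connected subgraph of the necklace adjacency graph N'(q,ℓ). Then there exists an ℓ-valid (q, t·ℓ)-colouring of (q^ℓ − q)/(t·ℓ) eBugs, so E(q, t·ℓ, ℓ) ≥ (q^ℓ − q)/(tℓ); and if q < t·ℓ then E(q, t·ℓ, ℓ) = (q^ℓ − q)/(tℓ). -/

import Mathlib

/-- A `(q,k)`-colouring of `n` eBugs is `ℓ`-valid if its `ℓ`-window map is injective. -/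
def ebugValid (q k ℓ n : ℕ) (c : Fin n → ZMod k → Fin q) : Prop :=
  Function.Injective (fun p : Fin n × ZMod k => fun s : Fin ℓ => c p.1 (p.2 + (s : ℕ)))

/-- The eBug number `E(q,k,ℓ)`: the greatest `n` admitting an `ℓ`-valid `(q,k)`-colouring. -/
noncomputable def eBugNumber (q k ℓ : ℕ) : ℕ :=
  sSup {n : ℕ | ∃ c : Fin n → ZMod k → Fin q, ebugValid q k ℓ n c}

/-- Left rotation of a word of length `ℓ` over `q` colours. -/
def rot (q ℓ : ℕ) (w : ZMod ℓ → Fin q) : ZMod ℓ → Fin q := fun j => w (j + 1)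

/-- Two words are related if some rotation of the first equals the second. -/
def rotRel (q ℓ : ℕ) (w w' : ZMod ℓ → Fin q) : Prop :=
  ∃ i : ℕ, (rot q ℓ)^[i] w = w'

/-- A word is aperiodic if `ρ^[i] w = w` only when `i ≡ 0 (mod ℓ)`. -/
def Aperiodic (q ℓ : ℕ) (w : ZMod ℓ → Fin q) : Prop :=
  ∀ i : ℕ, (rot q ℓ)^[i] w = w → ℓ ∣ i

/-- A necklace is a rotation-orbit of words. -/
def Necklace (q ℓ : ℕ) : Type := Quot (rotRel q ℓ)

/-- An aperiodic necklace is the orbit of an aperiodic word. -/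
def ApNecklace (q ℓ : ℕ) : Type :=
  {x : Necklace q ℓ // ∃ w : ZMod ℓ → Fin q, Aperiodic q ℓ w ∧ Quot.mk (rotRel q ℓ) w = x}

/-- The necklace adjacency graph `N'(q,ℓ)`: two distinct aperiodic necklaces are adjacent
iff they have representative words agreeing in positions `0, …, ℓ-2`
(i.e. they share an `(ℓ-1)`-factor). -/
def necklaceGraph (q ℓ : ℕ) : SimpleGraph (ApNecklace q ℓ) :=
  SimpleGraph.fromRel (fun x y => ∃ w w' : ZMod ℓ → Fin q,
    Quot.mk (rotRel q ℓ) w = x.1 ∧ Quot.mk (rotRel q ℓ) w' = y.1 ∧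
    ∀ s : ℕ, s ≤ ℓ - 2 → w (s : ZMod ℓ) = w' (s : ZMod ℓ))


/-!
For each part `S` of the partition we build one cyclic word of length `|S| · ℓ` whose `ℓ`-windows
are exactly the words of the necklaces in `S`. A single necklace, read cyclically, is such a word.
If `x` is already covered and `y` is a new neighbour of `x`, with representatives agreeing in their
first `ℓ - 1` letters, then inserting the cyclic word of `y` just before the window where the
representative of `x` occurs keeps every old window and adds exactly the rotations of `y`; since
the part is connected, this reaches all of `S`. The cyclic words of the parts are the eBugs:
together their windows cover all `q^ℓ - q` aperiodic words (the non-constant ones, as `ℓ` is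
prime), and there are exactly that many windows, so they are distinct. Conversely the windows of
any valid colouring are distinct words, so `E · tℓ ≤ q^ℓ = (q^ℓ - q) + q`, which forces equality
when `q < tℓ`.
-/

theorem SimpleGraph.Connected.induction_on_insert {V : Type*} [Finite V] {G : SimpleGraph V}
    (hG : G.Connected) {p : Set V → Prop} (hsingleton : ∀ v, p {v})
    (hinsert : ∀ ⦃U x y⦄, p U → x ∈ U → y ∉ U → G.Adj x y → p (insert y U)) :
    p Set.univ := by
  obtain ⟨v⟩ := hG.nonempty
  obtain ⟨U, hU, hmax⟩ :=
    Set.exists_max_image {U | p U} Set.ncard (Set.toFinite _) ⟨{v}, hsingleton v⟩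
  by_contra hne
  obtain ⟨y, hy⟩ := (Set.ne_univ_iff_exists_notMem U).1 (by rintro rfl; exact hne hU)
  obtain ⟨x, hx⟩ : U.Nonempty := by
    have := hmax {v} (hsingleton v)
    rw [Set.ncard_singleton] at this
    exact Set.nonempty_of_ncard_ne_zero (by omega)
  obtain ⟨d, -, hd₁, hd₂⟩ := (hG.preconnected x y).some.exists_boundary_dart U hx hy
  have := hmax _ (hinsert hU hd₁ hd₂ d.adj)
  rw [Set.ncard_insert_of_notMem hd₂] at this
  omega

theorem Function.injective_of_card_le_ncard_range {α β : Type*} [Finite α] {f : α → β}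
    (h : Nat.card α ≤ (Set.range f).ncard) : Function.Injective f :=
  Set.rangeFactorization_injective.1 (Set.rangeFactorization_surjective.bijective_of_nat_card_le
    (h.trans_eq (Nat.card_coe_set_eq _).symm)).1

section Splice

variable {α : Type*} {ℓ M K : ℕ}

def window (ℓ : ℕ) (c : ZMod K → α) (j : ZMod K) : ZMod ℓ → α := fun s => c (j + s.val)

def splice (d : ZMod ℓ → α) (c : ZMod M → α) (p : ZMod M) : ZMod (ℓ + M) → α :=
  fun i => if i.val < ℓ then d i.val else c (p + (i.val - ℓ : ℕ))

variable [NeZero ℓ] {d : ZMod ℓ → α} {c : ZMod M → α} {p : ZMod M}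

lemma window_self (d : ZMod ℓ → α) (j : ZMod ℓ) : window ℓ d j = fun s => d (j + s) := by
  funext s
  simp [window]

lemma window_splice_natCast_of_lt (hℓM : ℓ ≤ M) (hpd : ∀ k : ℕ, k + 2 ≤ ℓ → c (p + k) = d k)
    {n : ℕ} (hn : n < ℓ) : window ℓ (splice d c p) n = window ℓ d n := by
  funext s
  have hs := s.val_lt
  simp only [window, splice]
  rw [← Nat.cast_add, ZMod.val_cast_of_lt (by omega : n + s.val < ℓ + M)]
  split_ifs with h
  · push_cast; rfl
  · rw [hpd _ (by omega), Nat.cast_sub (by omega)]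
    simp

lemma window_splice_natCast_add (hpd : ∀ k : ℕ, k + 2 ≤ ℓ → c (p + k) = d k)
    {k : ℕ} (hk : k < M) : window ℓ (splice d c p) ((ℓ + k : ℕ)) = window ℓ c (p + k) := by
  funext s
  have hs := s.val_lt
  simp only [window, splice]
  rw [← Nat.cast_add]
  rcases lt_or_ge (ℓ + k + s.val) (ℓ + M) with h | h
  · rw [ZMod.val_cast_of_lt h, if_neg (by omega), show ℓ + k + s.val - ℓ = k + s.val by omega]
    push_cast
    ring_nf
  · -- the window wraps around: its tail lies in the inserted word `d`
    have hwrap : ((ℓ + k + s.val : ℕ) : ZMod (ℓ + M)) = ((k + s.val - M : ℕ) : ZMod (ℓ + M)) := by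
      rw [show ℓ + k + s.val = k + s.val - M + (ℓ + M) by omega, Nat.cast_add, ZMod.natCast_self,
        add_zero]
    rw [hwrap, ZMod.val_cast_of_lt (by omega), if_pos (by omega), ← hpd _ (by omega),
      Nat.cast_sub (by omega), ZMod.natCast_self]
    push_cast
    ring_nf

-- Windows crossing either junction are still windows of `d` or of `c`, because `c` agrees with
-- `d` on the `ℓ - 1` positions starting at `p`.
lemma range_window_splice (hℓM : ℓ ≤ M) (hpd : ∀ k : ℕ, k + 2 ≤ ℓ → c (p + k) = d k) :
    Set.range (window ℓ (splice d c p)) = Set.range (window ℓ d) ∪ Set.range (window ℓ c) := by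
  have : NeZero M := ⟨by have := NeZero.ne ℓ; omega⟩
  apply Set.Subset.antisymm
  · rintro _ ⟨i, rfl⟩
    rw [← ZMod.natCast_zmod_val i]
    rcases lt_or_ge i.val ℓ with h | h
    · exact Or.inl ⟨_, (window_splice_natCast_of_lt hℓM hpd h).symm⟩
    · obtain ⟨k, hk⟩ := Nat.exists_eq_add_of_le h
      have := i.val_lt
      rw [hk, window_splice_natCast_add hpd (by omega)]
      exact Or.inr (Set.mem_range_self _)
  · rintro _ (⟨j, rfl⟩ | ⟨j, rfl⟩)
    · refine ⟨j.val, ?_⟩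
      rw [window_splice_natCast_of_lt hℓM hpd j.val_lt, ZMod.natCast_zmod_val]
    · refine ⟨(ℓ + (j - p).val : ℕ), ?_⟩
      rw [window_splice_natCast_add hpd (j - p).val_lt, ZMod.natCast_zmod_val, add_sub_cancel]

end Splice

section Necklace

variable {q ℓ : ℕ} {w w' : ZMod ℓ → Fin q}

lemma rot_iterate_apply (w : ZMod ℓ → Fin q) (n : ℕ) (z : ZMod ℓ) :
    (rot q ℓ)^[n] w z = w (z + n) := by
  induction n generalizing w with
  | zero => simp
  | succ n ih =>
    rw [Function.iterate_succ_apply, ih]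
    simp [rot, add_assoc]

lemma rot_iterate_eq_self_iff {n : ℕ} : (rot q ℓ)^[n] w = w ↔ ∀ z, w (z + n) = w z := by
  simp [funext_iff, rot_iterate_apply]

lemma aperiodic_iff_notMem_range_const [Fact ℓ.Prime] {w : ZMod ℓ → Fin q} :
    Aperiodic q ℓ w ↔ w ∉ Set.range (Function.const (ZMod ℓ)) := by
  have hℓ : ℓ.Prime := Fact.out
  constructor
  · rintro hw ⟨v, rfl⟩
    exact hℓ.not_dvd_one (hw 1 (rot_iterate_eq_self_iff.2 fun _ => rfl))
  · intro hw i hi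
    by_contra hdvd
    have hi0 : (i : ZMod ℓ) ≠ 0 := by rwa [Ne, ZMod.natCast_eq_zero_iff]
    have hmul : ∀ (n : ℕ) z, w (z + n * i) = w z := by
      intro n
      induction n with
      | zero => simp
      | succ n ih =>
        intro z
        rw [Nat.cast_succ, add_one_mul, ← add_assoc, rot_iterate_eq_self_iff.1 hi, ih]
    refine hw ⟨w 0, funext fun z => ?_⟩
    have := hmul (z * (i : ZMod ℓ)⁻¹).val 0
    rw [ZMod.natCast_zmod_val, inv_mul_cancel_right₀ hi0, zero_add] at this
    exact this.symm

lemma ncard_aperiodic [Fact ℓ.Prime] :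
    {w : ZMod ℓ → Fin q | Aperiodic q ℓ w}.ncard = q ^ ℓ - q := by
  have : {w : ZMod ℓ → Fin q | Aperiodic q ℓ w} = (Set.range (Function.const (ZMod ℓ)))ᶜ := by
    ext w
    exact aperiodic_iff_notMem_range_const
  rw [this, Set.ncard_compl, Set.ncard_range_of_injective Function.const_injective]
  simp

variable [NeZero ℓ]

lemma rotRel_iff : rotRel q ℓ w w' ↔ ∃ j, w' = window ℓ w j := by
  constructor
  · rintro ⟨n, rfl⟩
    exact ⟨n, funext fun z => by rw [rot_iterate_apply, window_self, add_comm]⟩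
  · rintro ⟨j, rfl⟩
    refine ⟨j.val, funext fun z => ?_⟩
    rw [rot_iterate_apply, window_self, ZMod.natCast_zmod_val, add_comm]

lemma rotRel_equivalence : Equivalence (rotRel q ℓ) where
  refl w := rotRel_iff.2 ⟨0, by simp [window_self]⟩
  symm {w w'} h := by
    obtain ⟨j, rfl⟩ := rotRel_iff.1 h
    exact rotRel_iff.2 ⟨-j, by simp [window_self]⟩
  trans {w w' w''} h h' := by
    obtain ⟨j, rfl⟩ := rotRel_iff.1 h
    obtain ⟨j', rfl⟩ := rotRel_iff.1 h'
    exact rotRel_iff.2 ⟨j + j', by simp [window_self, add_assoc]⟩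

lemma mk_eq_mk_iff :
    Quot.mk (rotRel q ℓ) w = Quot.mk (rotRel q ℓ) w' ↔ ∃ j, w' = window ℓ w j := by
  rw [Quot.eq, rotRel_equivalence.eqvGen_iff, rotRel_iff]

lemma mk_window (w : ZMod ℓ → Fin q) (j : ZMod ℓ) :
    Quot.mk (rotRel q ℓ) (window ℓ w j) = Quot.mk (rotRel q ℓ) w :=
  (mk_eq_mk_iff.2 ⟨j, rfl⟩).symm

instance : Finite (ApNecklace q ℓ) := by
  unfold ApNecklace Necklace
  infer_instance

lemma aperiodic_window (hw : Aperiodic q ℓ w) (j : ZMod ℓ) : Aperiodic q ℓ (window ℓ w j) := by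
  intro i hi
  refine hw i (rot_iterate_eq_self_iff.2 fun z => ?_)
  have := rot_iterate_eq_self_iff.1 hi (z - j)
  simp only [window_self] at this
  rwa [← add_assoc, add_sub_cancel] at this

lemma Aperiodic.injective_window (hw : Aperiodic q ℓ w) : Function.Injective (window ℓ w) := by
  intro i j hij
  have hdvd : ℓ ∣ (i - j).val := hw _ <| rot_iterate_eq_self_iff.2 fun z => by
    have := congrFun hij (z - j)
    simp only [window_self, add_sub_cancel] at this
    rw [ZMod.natCast_zmod_val, ← this]
    ring_nf
  rw [← sub_eq_zero, ← ZMod.val_eq_zero]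
  exact Nat.eq_zero_of_dvd_of_lt hdvd (ZMod.val_lt _)

end Necklace

section NecklaceWords

variable {q ℓ : ℕ}

def necklaceWords (U : Set (ApNecklace q ℓ)) : Set (ZMod ℓ → Fin q) :=
  {w | ∃ x ∈ U, Quot.mk (rotRel q ℓ) w = x.1}

lemma necklaceWords_insert (y : ApNecklace q ℓ) (U : Set (ApNecklace q ℓ)) :
    necklaceWords (insert y U) = necklaceWords {y} ∪ necklaceWords U := by
  ext w
  simp [necklaceWords, or_and_right, exists_or]

lemma necklaceWords_sUnion (P : Set (Set (ApNecklace q ℓ))) :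
    necklaceWords (⋃₀ P) = ⋃ s : P, necklaceWords (s : Set (ApNecklace q ℓ)) := by
  ext w
  simp only [necklaceWords, Set.mem_sUnion, Set.mem_iUnion, Set.mem_ofPred_eq, Subtype.exists,
    exists_prop]
  exact ⟨fun ⟨x, ⟨s, hs, hx⟩, h⟩ => ⟨s, hs, x, hx, h⟩, fun ⟨s, hs, x, hx, h⟩ => ⟨x, ⟨s, hs, hx⟩, h⟩⟩

variable [NeZero ℓ]

lemma necklaceWords_univ :
    necklaceWords (Set.univ : Set (ApNecklace q ℓ)) = {w | Aperiodic q ℓ w} := by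
  ext w
  constructor
  · rintro ⟨⟨_, w₀, hw₀, rfl⟩, -, hw⟩
    obtain ⟨j, rfl⟩ := mk_eq_mk_iff.1 hw.symm
    exact aperiodic_window hw₀ j
  · exact fun hw => ⟨⟨_, w, hw, rfl⟩, trivial, rfl⟩

lemma range_window_eq_necklaceWords {w : ZMod ℓ → Fin q} {x : ApNecklace q ℓ}
    (hw : Quot.mk (rotRel q ℓ) w = x.1) : Set.range (window ℓ w) = necklaceWords {x} := by
  ext w'
  simp only [necklaceWords, Set.mem_singleton_iff, exists_eq_left, Set.mem_ofPred_eq, ← hw,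
    Set.mem_range]
  rw [eq_comm, mk_eq_mk_iff]
  simp only [eq_comm]

lemma ncard_aperiodic_eq_card_mul :
    {w : ZMod ℓ → Fin q | Aperiodic q ℓ w}.ncard = Nat.card (ApNecklace q ℓ) * ℓ := by
  choose rep hrep_ap hrep using fun x : ApNecklace q ℓ => x.2
  let f : ApNecklace q ℓ × ZMod ℓ → (ZMod ℓ → Fin q) := fun xj => window ℓ (rep xj.1) xj.2
  have hf : Function.Injective f := by
    rintro ⟨x, i⟩ ⟨y, j⟩ (h : window ℓ (rep x) i = window ℓ (rep y) j)
    obtain rfl : x = y := Subtype.ext <| by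
      rw [← hrep x, ← hrep y]
      exact (mk_window _ i).symm.trans ((congrArg _ h).trans (mk_window _ j))
    exact Prod.ext rfl ((hrep_ap x).injective_window h)
  have hrange : Set.range f = {w | Aperiodic q ℓ w} := by
    ext w
    refine ⟨?_, fun hw => ?_⟩
    · rintro ⟨⟨x, j⟩, rfl⟩
      exact aperiodic_window (hrep_ap x) j
    · obtain ⟨j, hj⟩ := mk_eq_mk_iff.1 (hrep ⟨_, w, hw, rfl⟩)
      exact ⟨(_, j), hj.symm⟩
  rw [← hrange, Set.ncard_range_of_injective hf, Nat.card_prod, Nat.card_zmod]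

end NecklaceWords

section Cycles

variable {q ℓ M : ℕ}

lemma exists_agreeing_reps_of_adj {x y : ApNecklace q ℓ} (h : (necklaceGraph q ℓ).Adj x y) :
    ∃ w w' : ZMod ℓ → Fin q, Quot.mk (rotRel q ℓ) w = x.1 ∧ Quot.mk (rotRel q ℓ) w' = y.1 ∧
      ∀ s : ℕ, s ≤ ℓ - 2 → w s = w' s := by
  rcases h.2 with ⟨w, w', hw, hw', h⟩ | ⟨w, w', hw, hw', h⟩
  · exact ⟨w, w', hw, hw', h⟩
  · exact ⟨w', w, hw', hw, fun s hs => (h s hs).symm⟩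

variable [NeZero ℓ]

lemma exists_range_window_eq_insert {U : Set (ApNecklace q ℓ)} {x y : ApNecklace q ℓ}
    {c : ZMod M → Fin q} (hℓM : ℓ ≤ M) (hc : Set.range (window ℓ c) = necklaceWords U)
    (hx : x ∈ U) (hxy : (necklaceGraph q ℓ).Adj x y) :
    ∃ c' : ZMod (ℓ + M) → Fin q, Set.range (window ℓ c') = necklaceWords (insert y U) := by
  obtain ⟨wx, wy, hwx, hwy, hagree⟩ := exists_agreeing_reps_of_adj hxy
  obtain ⟨p, hp⟩ : wx ∈ Set.range (window ℓ c) := hc ▸ ⟨x, hx, hwx⟩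
  refine ⟨splice wy c p, ?_⟩
  rw [range_window_splice hℓM (fun k hk => ?_), range_window_eq_necklaceWords hwy, hc,
    necklaceWords_insert]
  rw [← hagree k (by omega), ← hp, window, ZMod.val_cast_of_lt (by omega)]

theorem exists_range_window_eq_of_connected {S : Set (ApNecklace q ℓ)}
    (hS : ((necklaceGraph q ℓ).induce S).Connected) :
    ∃ c : ZMod (S.ncard * ℓ) → Fin q, Set.range (window ℓ c) = necklaceWords S := by
  have huniv : ∃ c : ZMod ((Set.univ : Set S).ncard * ℓ) → Fin q,
      Set.range (window ℓ c) = necklaceWords (Subtype.val '' (Set.univ : Set S)) := by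
    refine hS.induction_on_insert (p := fun U => ∃ c : ZMod (U.ncard * ℓ) → Fin q,
      Set.range (window ℓ c) = necklaceWords (Subtype.val '' U)) (fun v => ?_) ?_
    · obtain ⟨w, -, hw⟩ := v.1.2
      rw [Set.ncard_singleton, one_mul, Set.image_singleton]
      exact ⟨w, range_window_eq_necklaceWords hw⟩
    · rintro U x y ⟨c, hc⟩ hx hy hxy
      rw [Set.ncard_insert_of_notMem hy, add_one_mul, add_comm, Set.image_insert_eq]
      have hU : 0 < U.ncard := (Set.ncard_pos).2 ⟨x, hx⟩
      exact exists_range_window_eq_insert (Nat.le_mul_of_pos_left ℓ hU) hc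
        (Set.mem_image_of_mem _ hx) hxy
  rwa [Set.ncard_univ, Nat.card_coe_set_eq, Set.image_univ, Subtype.range_coe] at huniv

end Cycles

theorem Setoid.IsPartition.card_eq_ncard_mul {α : Type*} [Finite α] {P : Set (Set α)}
    (hP : Setoid.IsPartition P) {t : ℕ} (h : ∀ s ∈ P, s.ncard = t) : Nat.card α = P.ncard * t := by
  have : Fintype P := Fintype.ofFinite P
  rw [← Set.ncard_univ, hP.ncard_eq_finsum Set.univ, finsum_eq_sum_of_fintype]
  simp only [Set.univ_inter, fun s : P => h s s.2, Finset.sum_const, Finset.card_univ, smul_eq_mul,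
    ← Nat.card_eq_fintype_card, Nat.card_coe_set_eq]

section EBugs

variable {q k ℓ n : ℕ}

lemma ebugValid_of_injective_window [NeZero ℓ] {c : Fin n → ZMod k → Fin q}
    (h : Function.Injective fun p : Fin n × ZMod k => window ℓ (c p.1) p.2) :
    ebugValid q k ℓ n c :=
  fun _ _ hab => h (funext fun s => congrFun hab ⟨s.val, s.val_lt⟩)

lemma ebugValid.mul_le {c : Fin n → ZMod k → Fin q} (h : ebugValid q k ℓ n c) :
    n * k ≤ q ^ ℓ := by
  simpa [Nat.card_prod, Nat.card_fun] using Nat.card_le_card_of_injective _ h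

lemma bddAbove_ebugValid (hk : 0 < k) :
    BddAbove {n | ∃ c : Fin n → ZMod k → Fin q, ebugValid q k ℓ n c} :=
  ⟨q ^ ℓ, fun _ ⟨_, hc⟩ => (Nat.le_mul_of_pos_right _ hk).trans hc.mul_le⟩

lemma le_eBugNumber (hk : 0 < k) {c : Fin n → ZMod k → Fin q} (h : ebugValid q k ℓ n c) :
    n ≤ eBugNumber q k ℓ :=
  le_csSup (bddAbove_ebugValid hk) ⟨c, h⟩

lemma eBugNumber_mul_le (hk : 0 < k) : eBugNumber q k ℓ * k ≤ q ^ ℓ := by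
  have hne : {n | ∃ c : Fin n → ZMod k → Fin q, ebugValid q k ℓ n c}.Nonempty :=
    ⟨0, fun i => i.elim0, fun a => a.1.elim0⟩
  obtain ⟨c, hc⟩ := Nat.sSup_mem hne (bddAbove_ebugValid hk)
  exact hc.mul_le

end EBugs

theorem exists_ebugValid_of_isPartition {q ℓ t : ℕ} [Fact ℓ.Prime] (ht : 0 < t)
    {P : Set (Set (ApNecklace q ℓ))} (hP : Setoid.IsPartition P)
    (hparts : ∀ s ∈ P, s.ncard = t ∧ ((necklaceGraph q ℓ).induce s).Connected) :
    ∃ c : Fin P.ncard → ZMod (t * ℓ) → Fin q, ebugValid q (t * ℓ) ℓ P.ncard c := by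
  have hcycle (s : P) : ∃ c : ZMod (t * ℓ) → Fin q, Set.range (window ℓ c) = necklaceWords s := by
    rw [← (hparts s s.2).1]
    exact exists_range_window_eq_of_connected (hparts s s.2).2
  choose cycle hcycle using hcycle
  have : NeZero (t * ℓ) := ⟨(Nat.mul_pos ht (Fact.out : ℓ.Prime).pos).ne'⟩
  let e : Fin P.ncard ≃ P := (Finite.equivFinOfCardEq (Nat.card_coe_set_eq P)).symm
  refine ⟨fun i => cycle (e i),
    ebugValid_of_injective_window (Function.injective_of_card_le_ncard_range ?_)⟩
  have hrange : Set.range (fun p : Fin P.ncard × ZMod (t * ℓ) => window ℓ (cycle (e p.1)) p.2) =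
      {w | Aperiodic q ℓ w} := by
    rw [← necklaceWords_univ, ← hP.sUnion_eq_univ, necklaceWords_sUnion]
    ext w
    simp only [Set.mem_range, Prod.exists, Set.mem_iUnion, ← hcycle]
    exact ⟨fun ⟨i, j, h⟩ => ⟨e i, j, h⟩, fun ⟨s, j, h⟩ => ⟨e.symm s, j, by simpa using h⟩⟩
  rw [hrange, ncard_aperiodic_eq_card_mul, hP.card_eq_ncard_mul fun s hs => (hparts s hs).1,
    Nat.card_prod, Nat.card_fin, Nat.card_zmod, mul_assoc]

theorem stmt17_general (q ℓ t : ℕ) (hℓ : ℓ.Prime) (ht : 1 ≤ t)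
    (hpart : ∃ P : Set (Set (ApNecklace q ℓ)), Setoid.IsPartition P ∧
      ∀ s ∈ P, s.ncard = t ∧ ((necklaceGraph q ℓ).induce s).Connected) :
    (∃ c : Fin ((q ^ ℓ - q) / (t * ℓ)) → ZMod (t * ℓ) → Fin q,
      ebugValid q (t * ℓ) ℓ ((q ^ ℓ - q) / (t * ℓ)) c) ∧
    (q ^ ℓ - q) / (t * ℓ) ≤ eBugNumber q (t * ℓ) ℓ ∧
    (q < t * ℓ → eBugNumber q (t * ℓ) ℓ = (q ^ ℓ - q) / (t * ℓ)) := by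
  have : Fact ℓ.Prime := ⟨hℓ⟩
  obtain ⟨P, hP, hparts⟩ := hpart
  have hcount : q ^ ℓ - q = t * ℓ * P.ncard := by
    rw [← ncard_aperiodic, ncard_aperiodic_eq_card_mul,
      hP.card_eq_ncard_mul fun s hs => (hparts s hs).1]
    ring
  have htℓ : 0 < t * ℓ := Nat.mul_pos ht hℓ.pos
  rw [hcount, Nat.mul_div_cancel_left _ htℓ]
  obtain ⟨c, hc⟩ := exists_ebugValid_of_isPartition ht hP hparts
  refine ⟨⟨c, hc⟩, le_eBugNumber htℓ hc, fun hqtℓ => le_antisymm ?_ (le_eBugNumber htℓ hc)⟩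
  have hqℓ : q ≤ q ^ ℓ := Nat.le_self_pow hℓ.ne_zero q
  refine Nat.le_of_lt_succ (Nat.lt_of_mul_lt_mul_right (a := t * ℓ) ?_)
  calc eBugNumber q (t * ℓ) ℓ * (t * ℓ)
      ≤ q ^ ℓ := eBugNumber_mul_le htℓ
    _ = t * ℓ * P.ncard + q := by omega
    _ < (P.ncard + 1) * (t * ℓ) := by linarith

/-- **Necklace joining.** If the aperiodic necklaces of length a prime `ℓ` over `q` colours
can be partitioned into parts of size `t`, each inducing a connected subgraph of the
necklace adjacency graph, then `E(q, tℓ, ℓ) ≥ (q^ℓ − q)/(tℓ)`, with equality if `q < tℓ`. -/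
theorem stmt17 (q ℓ t : ℕ) (hℓ : ℓ.Prime) (hq : 1 ≤ q) (ht : 1 ≤ t)
    (hpart : ∃ P : Set (Set (ApNecklace q ℓ)), Setoid.IsPartition P ∧
      ∀ s ∈ P, s.ncard = t ∧ ((necklaceGraph q ℓ).induce s).Connected) :
    (∃ c : Fin ((q ^ ℓ - q) / (t * ℓ)) → ZMod (t * ℓ) → Fin q,
      ebugValid q (t * ℓ) ℓ ((q ^ ℓ - q) / (t * ℓ)) c) ∧
    (q ^ ℓ - q) / (t * ℓ) ≤ eBugNumber q (t * ℓ) ℓ ∧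
    (q < t * ℓ → eBugNumber q (t * ℓ) ℓ = (q ^ ℓ - q) / (t * ℓ)) :=
  stmt17_general q ℓ t hℓ ht hpart
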